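/- arXiv:2508.08482 — 4 statements merged into one kernel-verified Lean document; each statement's English description precedes it below -/
import Mathlib

section
/- Let d ≥ 1 and let f : ℝ^d → [0,∞) be measurable such that v ↦ |v|² f(v) is integrable and v ↦ f(v) log f(v) is integrable (with the convention 0·log 0 = 0). Then for every c > 0 there exists a constant C_{c,d} ≥ 0, depending only on c and d and not on f, such that ∫_{ℝ^d} f(v) log f(v) dv ≥ −(1/(4c)) ∫_{ℝ^d} |v|² f(v) dv − C_{c,d}. -/
open MeasureTheory

/-- Pointwise bound: for `x ≥ 0`, `a ≥ 0`, `x log x + a x ≥ -exp (-1 - a)`. -/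
lemma pointwise_entropy_bound {x a : ℝ} (hx : 0 ≤ x) (_ha : 0 ≤ a) :
    -Real.exp (-1 - a) ≤ x * Real.log x + a * x := by
  rcases eq_or_lt_of_le hx with h | h
  · simp [← h]
    positivity
  · have h1 : Real.log (Real.exp (-1 - a) / x) ≤ Real.exp (-1 - a) / x - 1 :=
      Real.log_le_sub_one_of_pos (by positivity)
    rw [Real.log_div (Real.exp_ne_zero _) (ne_of_gt h), Real.log_exp] at h1
    have h2 : (-1 - a - Real.log x) * x ≤ (Real.exp (-1 - a) / x - 1) * x :=
      mul_le_mul_of_nonneg_right h1 hx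
    rw [div_sub_one (ne_of_gt h), div_mul_cancel₀ _ (ne_of_gt h)] at h2
    nlinarith [h2]

/-- Gaussian integrability on a Euclidean space. -/
lemma integrable_gaussian (d : ℕ) {b : ℝ} (hb : 0 < b) :
    Integrable (fun v : EuclideanSpace ℝ (Fin d) => Real.exp (-b * ‖v‖ ^ 2)) := by
  have h := (GaussianFourier.integrable_cexp_neg_mul_sq_norm_add
    (b := (b : ℂ)) (by simpa using hb) 0 (0 : EuclideanSpace ℝ (Fin d))).norm
  simpa [Complex.norm_exp, ← Complex.ofReal_pow] using h

/-- Lemma 3.10: the negative part of the Boltzmann entropy is controlled by the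
second velocity moment, with a constant depending only on `c` and `d`. -/
theorem entropy_lower_bound (d : ℕ) (hd : 1 ≤ d) (c : ℝ) (hc : 0 < c) :
    ∃ C : ℝ, 0 ≤ C ∧
      ∀ f : EuclideanSpace ℝ (Fin d) → ℝ, Measurable f → (∀ v, 0 ≤ f v) →
        Integrable (fun v => ‖v‖^2 * f v) →
        Integrable (fun v => f v * Real.log (f v)) →
        (∫ v, f v * Real.log (f v)) ≥
          -(1/(4*c)) * (∫ v, ‖v‖^2 * f v) - C := by
  set b : ℝ := 1 / (4 * c) with hb
  have hb0 : 0 < b := by positivity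
  have hg : Integrable (fun v : EuclideanSpace ℝ (Fin d) => Real.exp (-b * ‖v‖ ^ 2)) :=
    integrable_gaussian d hb0
  refine ⟨∫ v : EuclideanSpace ℝ (Fin d), Real.exp (-1 - b * ‖v‖ ^ 2), ?_, ?_⟩
  · exact integral_nonneg fun v => (Real.exp_pos _).le
  · intro f hfm hf0 hf2 hfl
    have hg' : Integrable (fun v : EuclideanSpace ℝ (Fin d) => Real.exp (-1 - b * ‖v‖ ^ 2)) := by
      have := hg.const_mul (Real.exp (-1))
      simpa [← Real.exp_add, sub_eq_add_neg, add_comm] using this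
    have key : ∫ v : EuclideanSpace ℝ (Fin d), (-Real.exp (-1 - b * ‖v‖ ^ 2)) ≤
        ∫ v, (f v * Real.log (f v) + b * (‖v‖ ^ 2 * f v)) := by
      apply integral_mono hg'.neg (hfl.add (hf2.const_mul b))
      intro v
      have := pointwise_entropy_bound (hf0 v) (a := b * ‖v‖ ^ 2) (by positivity)
      simp only [Pi.neg_apply, Pi.add_apply]
      nlinarith [this]
    rw [integral_neg, integral_add hfl (hf2.const_mul b), integral_const_mul] at key
    linarith [key]
end

section
/- Let d ≥ 1. Let ρ', ρ : 𝕋^d → [0,∞) be integrable, let u', u : 𝕋^d → ℝ^d be measurable with u essentially bounded, and assume that x ↦ ρ'(x)|u'(x)|² is integrable. Then, denoting by ‖·‖_F the Frobenius norm on d×d real matrices (so that ‖a⊗b‖_F = |a||b| for a,b ∈ ℝ^d), one has ∫_{𝕋^d} ‖ρ'u'⊗u' − ρu⊗u‖_F dx ≤ ∫_{𝕋^d} ρ'|u'−u|² dx + 2(∫_{𝕋^d} ρ' dx)^{1/2}(∫_{𝕋^d} ρ'|u'−u|² dx)^{1/2} ‖u‖_{L^∞} + ‖u‖_{L^∞}²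 ∫_{𝕋^d} |ρ'−ρ| dx. -/
/-!
Expanding around `u`,
`ρ' u'⊗u' - ρ u⊗u = ρ' (u'-u)⊗(u'-u) + ρ' (u'-u)⊗u + ρ' u⊗(u'-u) + (ρ' - ρ) u⊗u`,
and `‖a⊗b‖_F ≤ |a| |b|` (submultiplicativity of the Frobenius norm on a column times a row).
With `M = ‖u‖_{L^∞}` the integrand is thus bounded a.e. by
`ρ' |u'-u|² + 2 M ρ' |u'-u| + M² |ρ' - ρ|`, and the middle term is integrated with the
Cauchy–Schwarz inequality for the weight `ρ'`.
-/

open MeasureTheory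

/-- The Frobenius norm of a real d×d matrix. -/
noncomputable def frobNorm {d : ℕ} (M : Matrix (Fin d) (Fin d) ℝ) : ℝ :=
  Real.sqrt (∑ i, ∑ j, (M i j)^2)

/-- The outer product a⊗b of two vectors, as a d×d matrix with entries aᵢbⱼ. -/
def outerProd {d : ℕ} (a b : EuclideanSpace ℝ (Fin d)) : Matrix (Fin d) (Fin d) ℝ :=
  Matrix.of fun i j => a i * b j

section Frobenius

attribute [local instance] Matrix.frobeniusNormedAddCommGroup Matrix.frobeniusNormedSpace

variable {d : ℕ}

lemma frobNorm_eq_norm (M : Matrix (Fin d) (Fin d) ℝ) : frobNorm M = ‖M‖ := by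
  simp [Matrix.frobenius_norm_def, frobNorm, Real.sqrt_eq_rpow, Real.norm_eq_abs, sq_abs]

lemma outerProd_eq_replicateCol_mul_replicateRow (a b : EuclideanSpace ℝ (Fin d)) :
    outerProd a b = Matrix.replicateCol (Fin 1) a.ofLp * Matrix.replicateRow (Fin 1) b.ofLp := by
  ext i j
  simp [outerProd, Matrix.mul_apply]

lemma norm_outerProd_le (a b : EuclideanSpace ℝ (Fin d)) : ‖outerProd a b‖ ≤ ‖a‖ * ‖b‖ := by
  rw [outerProd_eq_replicateCol_mul_replicateRow]
  refine (Matrix.frobenius_norm_mul _ _).trans_eq ?_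
  congr 1
  · exact Matrix.frobenius_norm_replicateCol (ι := Fin 1) a.ofLp
  · exact Matrix.frobenius_norm_replicateRow (ι := Fin 1) b.ofLp

lemma frobNorm_smul_outerProd_sub_le {c c' M : ℝ} (hc : 0 ≤ c) (a b : EuclideanSpace ℝ (Fin d))
    (hb : ‖b‖ ≤ M) :
    frobNorm (c • outerProd a a - c' • outerProd b b) ≤
      c * ‖a - b‖ ^ 2 + 2 * M * (c * ‖a - b‖) + M ^ 2 * |c - c'| := by
  have expand : c • outerProd a a - c' • outerProd b b =
      c • outerProd (a - b) (a - b) + c • outerProd (a - b) b + c • outerProd b (a - b)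
        + (c - c') • outerProd b b := by
    ext i j
    simp only [Matrix.sub_apply, Matrix.add_apply, Matrix.smul_apply, outerProd, Matrix.of_apply,
      smul_eq_mul, PiLp.sub_apply]
    ring
  have hM : 0 ≤ M := (norm_nonneg b).trans hb
  rw [frobNorm_eq_norm, expand]
  refine norm_add₄_le.trans ?_
  simp only [norm_smul, Real.norm_eq_abs, abs_of_nonneg hc]
  calc c * ‖outerProd (a - b) (a - b)‖ + c * ‖outerProd (a - b) b‖ + c * ‖outerProd b (a - b)‖
        + |c - c'| * ‖outerProd b b‖
      ≤ c * (‖a - b‖ * ‖a - b‖) + c * (‖a - b‖ * M) + c * (M * ‖a - b‖)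
        + |c - c'| * (M * M) := by
        gcongr
        · exact norm_outerProd_le _ _
        · exact (norm_outerProd_le _ _).trans (by gcongr)
        · exact (norm_outerProd_le _ _).trans (by gcongr)
        · exact (norm_outerProd_le _ _).trans (by gcongr)
    _ = c * ‖a - b‖ ^ 2 + 2 * M * (c * ‖a - b‖) + M ^ 2 * |c - c'| := by ring

end Frobenius

section WeightedIntegrals

variable {α : Type*} [MeasurableSpace α] {μ : Measure α} {ρ : α → ℝ}

lemma integrable_mul_of_integrable_mul_sq {f : α → ℝ} (hρ0 : ∀ x, 0 ≤ ρ x)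
    (hρ : Integrable ρ μ) (hf : AEStronglyMeasurable f μ)
    (hρf : Integrable (fun x => ρ x * f x ^ 2) μ) :
    Integrable (fun x => ρ x * f x) μ := by
  refine (hρ.add hρf).mono' (hρ.aestronglyMeasurable.mul hf) (ae_of_all _ fun x => ?_)
  have hf_le : |f x| ≤ 1 + f x ^ 2 := by nlinarith [abs_nonneg (f x), sq_abs (f x)]
  calc ‖ρ x * f x‖ = ρ x * |f x| := by
        rw [norm_mul, Real.norm_of_nonneg (hρ0 x), Real.norm_eq_abs]
    _ ≤ ρ x * (1 + f x ^ 2) := by gcongr; exact hρ0 x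
    _ = ρ x + ρ x * f x ^ 2 := by ring

lemma integrable_mul_norm_sub_sq {E : Type*} [NormedAddCommGroup E] {v w : α → E} {M : ℝ}
    (hρ0 : ∀ x, 0 ≤ ρ x) (hρ : Integrable ρ μ) (hv : AEStronglyMeasurable v μ)
    (hw : AEStronglyMeasurable w μ) (hwM : ∀ᵐ x ∂μ, ‖w x‖ ≤ M)
    (hρv : Integrable (fun x => ρ x * ‖v x‖ ^ 2) μ) :
    Integrable (fun x => ρ x * ‖v x - w x‖ ^ 2) μ := by
  refine ((hρv.const_mul 2).add (hρ.const_mul (2 * M ^ 2))).mono'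
    (hρ.aestronglyMeasurable.mul ((hv.sub hw).norm.pow 2)) ?_
  filter_upwards [hwM] with x hx
  have hsub : ‖v x - w x‖ ^ 2 ≤ 2 * ‖v x‖ ^ 2 + 2 * M ^ 2 := by
    have := norm_sub_le (v x) (w x)
    nlinarith [norm_nonneg (v x - w x), norm_nonneg (w x), sq_nonneg (‖v x‖ - M)]
  calc ‖ρ x * ‖v x - w x‖ ^ 2‖ = ρ x * ‖v x - w x‖ ^ 2 :=
        Real.norm_of_nonneg (mul_nonneg (hρ0 x) (sq_nonneg _))
    _ ≤ ρ x * (2 * ‖v x‖ ^ 2 + 2 * M ^ 2) := by gcongr; exact hρ0 x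
    _ = 2 * (ρ x * ‖v x‖ ^ 2) + 2 * M ^ 2 * ρ x := by ring

lemma integral_mul_le_sqrt_mul_sqrt {f : α → ℝ} (hρ0 : ∀ x, 0 ≤ ρ x) (hf0 : ∀ x, 0 ≤ f x)
    (hρ : Integrable ρ μ) (hf : AEStronglyMeasurable f μ)
    (hρf : Integrable (fun x => ρ x * f x ^ 2) μ) :
    ∫ x, ρ x * f x ∂μ ≤ √(∫ x, ρ x ∂μ) * √(∫ x, ρ x * f x ^ 2 ∂μ) := by
  have hsqrt : AEStronglyMeasurable (fun x => √(ρ x)) μ :=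
    Real.continuous_sqrt.comp_aestronglyMeasurable hρ.aestronglyMeasurable
  have hsqrt_memLp : MemLp (fun x => √(ρ x)) (ENNReal.ofReal 2) μ := by
    rw [ENNReal.ofReal_ofNat, memLp_two_iff_integrable_sq hsqrt]
    simpa only [Real.sq_sqrt (hρ0 _)] using hρ
  have hsqrt_mul_memLp : MemLp (fun x => √(ρ x) * f x) (ENNReal.ofReal 2) μ := by
    rw [ENNReal.ofReal_ofNat, memLp_two_iff_integrable_sq (hsqrt.fun_mul hf)]
    simpa only [mul_pow, Real.sq_sqrt (hρ0 _)] using hρf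
  have holder := integral_mul_le_Lp_mul_Lq_of_nonneg Real.HolderConjugate.two_two
    (ae_of_all _ fun x => Real.sqrt_nonneg (ρ x))
    (ae_of_all _ fun x => mul_nonneg (Real.sqrt_nonneg (ρ x)) (hf0 x))
    hsqrt_memLp hsqrt_mul_memLp
  simpa only [← mul_assoc, Real.mul_self_sqrt (hρ0 _), Real.rpow_two, mul_pow,
    Real.sq_sqrt (hρ0 _), ← Real.sqrt_eq_rpow] using holder

end WeightedIntegrals

theorem stress_L1_estimate_general (d : ℕ)
    (ρ' ρ : (Fin d → AddCircle (1:ℝ)) → ℝ)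
    (u' u : (Fin d → AddCircle (1:ℝ)) → EuclideanSpace ℝ (Fin d))
    (hρ'0 : ∀ x, 0 ≤ ρ' x)
    (hρ'i : Integrable ρ') (hρi : Integrable ρ)
    (hu' : AEStronglyMeasurable u' volume)
    (hubdd : MemLp u ⊤ volume)
    (hke : Integrable (fun x => ρ' x * ‖u' x‖^2)) :
    (∫ x, frobNorm (ρ' x • outerProd (u' x) (u' x) - ρ x • outerProd (u x) (u x))) ≤
      (∫ x, ρ' x * ‖u' x - u x‖^2)
        + 2 * Real.sqrt (∫ x, ρ' x) * Real.sqrt (∫ x, ρ' x * ‖u' x - u x‖^2) *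
            (eLpNorm u ⊤ volume).toReal
        + (eLpNorm u ⊤ volume).toReal^2 * (∫ x, |ρ' x - ρ x|) := by
  set M := (eLpNorm u ⊤ volume).toReal
  have hM : 0 ≤ M := ENNReal.toReal_nonneg
  have hu_le : ∀ᵐ x, ‖u x‖ ≤ M := by
    simpa only [M, toReal_eLpNorm hubdd.1] using ae_le_lpNorm_exponent_top hubdd
  have hdist := (hu'.sub hubdd.1).norm
  have hsq : Integrable (fun x => ρ' x * ‖u' x - u x‖ ^ 2) :=
    integrable_mul_norm_sub_sq hρ'0 hρ'i hu' hubdd.1 hu_le hke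
  have hlin : Integrable (fun x => ρ' x * ‖u' x - u x‖) :=
    integrable_mul_of_integrable_mul_sq hρ'0 hρ'i hdist hsq
  have habs : Integrable (fun x => |ρ' x - ρ x|) := (hρ'i.sub hρi).abs
  have hCS := integral_mul_le_sqrt_mul_sqrt hρ'0 (fun x => norm_nonneg (u' x - u x)) hρ'i hdist hsq
  calc (∫ x, frobNorm (ρ' x • outerProd (u' x) (u' x) - ρ x • outerProd (u x) (u x)))
      ≤ ∫ x, (ρ' x * ‖u' x - u x‖ ^ 2 + 2 * M * (ρ' x * ‖u' x - u x‖) + M ^ 2 * |ρ' x - ρ x|) := by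
        refine integral_mono_of_nonneg (ae_of_all _ fun x => Real.sqrt_nonneg _)
          ((hsq.add (hlin.const_mul _)).add (habs.const_mul _)) ?_
        filter_upwards [hu_le] with x hx
        exact frobNorm_smul_outerProd_sub_le (hρ'0 x) (u' x) (u x) hx
    _ = (∫ x, ρ' x * ‖u' x - u x‖ ^ 2) + 2 * M * (∫ x, ρ' x * ‖u' x - u x‖)
          + M ^ 2 * ∫ x, |ρ' x - ρ x| := by
        rw [integral_add (hsq.fun_add (hlin.const_mul _)) (habs.const_mul _),
          integral_add hsq (hlin.const_mul _), integral_const_mul, integral_const_mul]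
    _ ≤ _ := by linarith [mul_le_mul_of_nonneg_left hCS (mul_nonneg zero_le_two hM)]

/-- Lemma A.5 (second inequality): control of the L¹ distance of the convective
stress tensors. -/
theorem stress_L1_estimate (d : ℕ) (hd : 1 ≤ d)
    (ρ' ρ : (Fin d → AddCircle (1:ℝ)) → ℝ)
    (u' u : (Fin d → AddCircle (1:ℝ)) → EuclideanSpace ℝ (Fin d))
    (hρ'0 : ∀ x, 0 ≤ ρ' x) (hρ0 : ∀ x, 0 ≤ ρ x)
    (hρ'i : Integrable ρ') (hρi : Integrable ρ)
    (hu' : AEStronglyMeasurable u' volume) (hu : AEStronglyMeasurable u volume)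
    (hubdd : MemLp u ⊤ volume)
    (hke : Integrable (fun x => ρ' x * ‖u' x‖^2)) :
    (∫ x, frobNorm (ρ' x • outerProd (u' x) (u' x) - ρ x • outerProd (u x) (u x))) ≤
      (∫ x, ρ' x * ‖u' x - u x‖^2)
        + 2 * Real.sqrt (∫ x, ρ' x) * Real.sqrt (∫ x, ρ' x * ‖u' x - u x‖^2) *
            (eLpNorm u ⊤ volume).toReal
        + (eLpNorm u ⊤ volume).toReal^2 * (∫ x, |ρ' x - ρ x|) :=
  stress_L1_estimate_general d ρ' ρ u' u hρ'0 hρ'i hρi hu' hubdd hke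
end

section
/- Let ε > 0, let ρ₁, ρ₂ ≥ 0 be real numbers and m₁, m₂ ∈ ℝ^d. Then | m₁/(ρ₁ + ε(1 + |m₁|)) − m₂/(ρ₂ + ε(1 + |m₂|)) | ≤ 2|m₁ − m₂|/ε + |ρ₁ − ρ₂|/ε². -/
/-! Split `D₁⁻¹ • m₁ - D₂⁻¹ • m₂ = D₁⁻¹ • (m₁ - m₂) + (D₁⁻¹ - D₂⁻¹) • m₂`. Both denominators are
at least `ε`, which bounds the first term; for the second, `‖m₂‖ / D₂ ≤ ε⁻¹` and
`|D₁ - D₂| ≤ |ρ₁ - ρ₂| + ε ‖m₁ - m₂‖`, since `m ↦ ‖m‖` is 1-Lipschitz. -/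

section InvSmul

variable {E : Type*} [SeminormedAddCommGroup E] [NormedSpace ℝ E]

theorem norm_inv_smul_sub_inv_smul_le {a b : ℝ} (ha : 0 < a) (hb : 0 < b) (x y : E) :
    ‖a⁻¹ • x - b⁻¹ • y‖ ≤ ‖x - y‖ / a + |a - b| / a * (‖y‖ / b) := by
  have hsplit : a⁻¹ • x - b⁻¹ • y = a⁻¹ • (x - y) + ((b - a) / (a * b)) • y := by
    have hinv : b⁻¹ = a⁻¹ - (b - a) / (a * b) := by field_simp; ring
    rw [hinv]
    module
  calc ‖a⁻¹ • x - b⁻¹ • y‖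
      ≤ ‖a⁻¹ • (x - y)‖ + ‖((b - a) / (a * b)) • y‖ := hsplit ▸ norm_add_le _ _
    _ = ‖x - y‖ / a + |a - b| / a * (‖y‖ / b) := by
      rw [norm_smul, norm_smul, Real.norm_eq_abs, Real.norm_eq_abs, abs_inv, abs_of_pos ha,
        abs_div, abs_of_pos (mul_pos ha hb), abs_sub_comm]
      ring

end InvSmul

section RegularizedDenominator

variable {E : Type*} [SeminormedAddCommGroup E] {ε ρ : ℝ}

theorem le_add_mul_one_add_norm (hε : 0 ≤ ε) (hρ : 0 ≤ ρ) (m : E) :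
    ε ≤ ρ + ε * (1 + ‖m‖) := by
  nlinarith [norm_nonneg m]

theorem norm_div_add_mul_one_add_norm_le (hε : 0 < ε) (hρ : 0 ≤ ρ) (m : E) :
    ‖m‖ / (ρ + ε * (1 + ‖m‖)) ≤ ε⁻¹ := by
  have hpos : 0 < ρ + ε * (1 + ‖m‖) := hε.trans_le (le_add_mul_one_add_norm hε.le hρ m)
  rw [div_le_iff₀ hpos, inv_mul_eq_div, le_div_iff₀ hε]
  nlinarith

theorem abs_add_mul_one_add_norm_sub_le (hε : 0 ≤ ε) (ρ₁ ρ₂ : ℝ) (m₁ m₂ : E) :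
    |ρ₁ + ε * (1 + ‖m₁‖) - (ρ₂ + ε * (1 + ‖m₂‖))| ≤ |ρ₁ - ρ₂| + ε * ‖m₁ - m₂‖ :=
  calc |ρ₁ + ε * (1 + ‖m₁‖) - (ρ₂ + ε * (1 + ‖m₂‖))|
      = |(ρ₁ - ρ₂) + ε * (‖m₁‖ - ‖m₂‖)| := by ring_nf
    _ ≤ |ρ₁ - ρ₂| + ε * |‖m₁‖ - ‖m₂‖| := by
      rw [← abs_of_nonneg hε, ← abs_mul, abs_of_nonneg hε]
      exact abs_add_le _ _
    _ ≤ |ρ₁ - ρ₂| + ε * ‖m₁ - m₂‖ := by gcongr; exact abs_norm_sub_norm_le m₁ m₂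

end RegularizedDenominator

/-- Pointwise stability estimate for the regularized bulk velocity
`u^(ε) = m / (ρ + ε(1 + |m|))`. -/
theorem regularized_velocity_stability (d : ℕ) (ε : ℝ) (hε : 0 < ε)
    (ρ₁ ρ₂ : ℝ) (h1 : 0 ≤ ρ₁) (h2 : 0 ≤ ρ₂)
    (m₁ m₂ : EuclideanSpace ℝ (Fin d)) :
    ‖(ρ₁ + ε * (1 + ‖m₁‖))⁻¹ • m₁ - (ρ₂ + ε * (1 + ‖m₂‖))⁻¹ • m₂‖ ≤
      2 * ‖m₁ - m₂‖ / ε + |ρ₁ - ρ₂| / ε^2 := by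
  have hD₁ := le_add_mul_one_add_norm hε.le h1 m₁
  have hD₂ := le_add_mul_one_add_norm hε.le h2 m₂
  calc _ ≤ ‖m₁ - m₂‖ / (ρ₁ + ε * (1 + ‖m₁‖))
          + |ρ₁ + ε * (1 + ‖m₁‖) - (ρ₂ + ε * (1 + ‖m₂‖))| / (ρ₁ + ε * (1 + ‖m₁‖))
            * (‖m₂‖ / (ρ₂ + ε * (1 + ‖m₂‖))) :=
        norm_inv_smul_sub_inv_smul_le (hε.trans_le hD₁) (hε.trans_le hD₂) m₁ m₂
    _ ≤ ‖m₁ - m₂‖ / ε + (|ρ₁ - ρ₂| + ε * ‖m₁ - m₂‖) / ε * ε⁻¹ := by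
        gcongr
        · exact abs_add_mul_one_add_norm_sub_le hε.le ρ₁ ρ₂ m₁ m₂
        · exact norm_div_add_mul_one_add_norm_le hε h2 m₂
    _ = 2 * ‖m₁ - m₂‖ / ε + |ρ₁ - ρ₂| / ε ^ 2 := by field_simp; ring
end

section
/- Let d ≥ 1, κ > 0, and let f : ℝ^d → [0,∞) be integrable with ρ_f := ∫_{ℝ^d} f(v) dv > 0, with v ↦ |v|² f(v) integrable and v ↦ f(v) log f(v) integrable (convention 0·log 0 = 0). Set u_f := ρ_f^{-1} ∫_{ℝ^d} v f(v) dv. Then (1/2) ρ_f |u_f|² + κ ρ_f log ρ_f ≤ ∫_{ℝ^d} ( (1/2)|v|² f(v) + κ f(v) log f(v) + κ (d/2) log(2πκ) f(v) ) dv. -/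
/-!
Gibbs' inequality `a log m + a - m ≤ a log a`, integrated against the local Maxwellian `M` with
the same mass `ρ` and mean velocity `u` as `f`, gives `∫ f log M ≤ ∫ f log f`. Since `log M` is
affine in `‖v - u‖²` and `∫ f ‖v - u‖² = ∫ ‖v‖² f - ρ ‖u‖²`, the left-hand side is explicit, and
multiplying by `κ` yields the claim.
-/

open MeasureTheory Real

section Gibbs

variable {α : Type*} [MeasurableSpace α] {μ : Measure α}

lemma mul_log_add_sub_le_mul_log {a m : ℝ} (ha : 0 ≤ a) (hm : 0 < m) :
    a * log m + a - m ≤ a * log a := by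
  rcases ha.eq_or_lt with rfl | ha
  · simpa using hm.le
  have h := mul_le_mul_of_nonneg_left (log_le_sub_one_of_pos (div_pos hm ha)) ha.le
  rw [log_div hm.ne' ha.ne', mul_sub_one, mul_div_cancel₀ _ ha.ne'] at h
  linarith

lemma integral_mul_log_add_sub_le {f M : α → ℝ} (hf : 0 ≤ᵐ[μ] f) (hM : ∀ᵐ x ∂μ, 0 < M x)
    (hf_int : Integrable f μ) (hM_int : Integrable M μ)
    (hfM : Integrable (fun x => f x * log (M x)) μ)
    (hent : Integrable (fun x => f x * log (f x)) μ) :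
    ∫ x, f x * log (M x) ∂μ + ∫ x, f x ∂μ - ∫ x, M x ∂μ ≤ ∫ x, f x * log (f x) ∂μ := by
  have hfM_add : Integrable (fun x => f x * log (M x) + f x) μ := hfM.add hf_int
  rw [← integral_add hfM hf_int, ← integral_sub hfM_add hM_int]
  refine integral_mono_ae (hfM_add.sub hM_int) hent ?_
  filter_upwards [hf, hM] with x hfx hMx
  exact mul_log_add_sub_le_mul_log hfx hMx

end Gibbs

section Moments

variable {E : Type*} [NormedAddCommGroup E] [InnerProductSpace ℝ E] [MeasurableSpace E]
  [BorelSpace E] [SecondCountableTopology E] {μ : Measure E} {f : E → ℝ}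

lemma integrable_smul_self_of_integrable_norm_sq_mul (hf : Integrable f μ)
    (hmom : Integrable (fun v => ‖v‖ ^ 2 * f v) μ) : Integrable (fun v => f v • v) μ := by
  refine (hf.norm.add hmom.norm).mono' (hf.aestronglyMeasurable.smul aestronglyMeasurable_id)
    (ae_of_all _ fun v => ?_)
  have hv : ‖v‖ ≤ 1 + ‖v‖ ^ 2 := by nlinarith [sq_nonneg (‖v‖ - 1)]
  calc ‖f v • v‖ = ‖f v‖ * ‖v‖ := norm_smul _ _
    _ ≤ ‖f v‖ * (1 + ‖v‖ ^ 2) := mul_le_mul_of_nonneg_left hv (norm_nonneg _)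
    _ = ‖f v‖ + ‖‖v‖ ^ 2 * f v‖ := by rw [norm_mul, norm_pow, norm_norm]; ring

omit [MeasurableSpace E] [BorelSpace E] [SecondCountableTopology E] in
lemma mul_norm_sub_sq_eq (a : ℝ) (v w : E) :
    a * ‖v - w‖ ^ 2 = ‖v‖ ^ 2 * a - 2 * inner ℝ w (a • v) + ‖w‖ ^ 2 * a := by
  rw [norm_sub_sq_real, inner_smul_right, real_inner_comm]
  ring

lemma integrable_mul_norm_sub_sq_s11 (hf : Integrable f μ)
    (hmom : Integrable (fun v => ‖v‖ ^ 2 * f v) μ) (w : E) :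
    Integrable (fun v => f v * ‖v - w‖ ^ 2) μ := by
  simp_rw [mul_norm_sub_sq_eq]
  exact (hmom.sub (((innerSL ℝ w).integrable_comp
    (integrable_smul_self_of_integrable_norm_sq_mul hf hmom)).const_mul 2)).add
    (hf.const_mul _)

lemma integral_mul_norm_sub_sq [CompleteSpace E] (hf : Integrable f μ)
    (hmom : Integrable (fun v => ‖v‖ ^ 2 * f v) μ) {u : E}
    (hmean : ∫ v, f v • v ∂μ = (∫ v, f v ∂μ) • u) :
    ∫ v, f v * ‖v - u‖ ^ 2 ∂μ = ∫ v, ‖v‖ ^ 2 * f v ∂μ - (∫ v, f v ∂μ) * ‖u‖ ^ 2 := by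
  have hfv := integrable_smul_self_of_integrable_norm_sq_mul hf hmom
  have hinner : Integrable (fun v => 2 * inner ℝ u (f v • v)) μ :=
    ((innerSL ℝ u).integrable_comp hfv).const_mul 2
  have hsub : Integrable (fun v => ‖v‖ ^ 2 * f v - 2 * inner ℝ u (f v • v)) μ :=
    hmom.sub hinner
  simp_rw [mul_norm_sub_sq_eq]
  rw [integral_add hsub (hf.const_mul _), integral_sub hmom hinner,
    integral_const_mul, integral_const_mul, integral_inner hfv, hmean, inner_smul_right,
    real_inner_self_eq_norm_sq]
  ring

end Moments

section Maxwellian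

variable {V : Type*} [NormedAddCommGroup V] [InnerProductSpace ℝ V] {κ ρ : ℝ}

variable (κ ρ) in
/-- The local Maxwellian of density `ρ`, mean velocity `u` and temperature `κ`. -/
noncomputable def maxwellian (u v : V) : ℝ :=
  ρ / (2 * π * κ) ^ (Module.finrank ℝ V / 2 : ℝ) * exp (-(2 * κ)⁻¹ * ‖v - u‖ ^ 2)

lemma maxwellian_pos (hκ : 0 < κ) (hρ : 0 < ρ) (u v : V) : 0 < maxwellian κ ρ u v := by
  unfold maxwellian
  positivity

lemma log_maxwellian (hκ : 0 < κ) (hρ : 0 < ρ) (u v : V) :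
    log (maxwellian κ ρ u v) = log ρ - Module.finrank ℝ V / 2 * log (2 * π * κ)
      - (2 * κ)⁻¹ * ‖v - u‖ ^ 2 := by
  have : (0 : ℝ) < (2 * π * κ) ^ (Module.finrank ℝ V / 2 : ℝ) := by positivity
  rw [maxwellian, log_mul (div_pos hρ this).ne' (exp_pos _).ne', log_div hρ.ne' this.ne',
    log_rpow (by positivity), log_exp]
  ring

lemma mul_log_maxwellian (hκ : 0 < κ) (hρ : 0 < ρ) (a : ℝ) (u v : V) :
    a * log (maxwellian κ ρ u v) = (log ρ - Module.finrank ℝ V / 2 * log (2 * π * κ)) * a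
      - (2 * κ)⁻¹ * (a * ‖v - u‖ ^ 2) := by
  rw [log_maxwellian hκ hρ]
  ring

variable [FiniteDimensional ℝ V] [MeasurableSpace V] [BorelSpace V]

lemma integral_exp_neg_norm_sub_sq (hκ : 0 < κ) (u : V) :
    ∫ v : V, exp (-(2 * κ)⁻¹ * ‖v - u‖ ^ 2) = (2 * π * κ) ^ (Module.finrank ℝ V / 2 : ℝ) := by
  rw [integral_sub_right_eq_self (fun v => exp (-(2 * κ)⁻¹ * ‖v‖ ^ 2)) u,
    GaussianFourier.integral_rexp_neg_mul_sq_norm (by positivity), div_inv_eq_mul]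
  ring_nf

lemma integral_maxwellian (hκ : 0 < κ) (u : V) : ∫ v, maxwellian κ ρ u v = ρ := by
  have : (0 : ℝ) < (2 * π * κ) ^ (Module.finrank ℝ V / 2 : ℝ) := by positivity
  simp only [maxwellian]
  rw [integral_const_mul, integral_exp_neg_norm_sub_sq hκ, div_mul_cancel₀ _ this.ne']

lemma integrable_maxwellian (hκ : 0 < κ) (hρ : 0 < ρ) (u : V) :
    Integrable (maxwellian κ ρ u) :=
  .of_integral_ne_zero <| by rw [integral_maxwellian hκ]; exact hρ.ne'

variable {f : V → ℝ}

lemma integrable_mul_log_maxwellian (hκ : 0 < κ) (hρ : 0 < ρ) (hf : Integrable f)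
    (hmom : Integrable (fun v => ‖v‖ ^ 2 * f v)) (u : V) :
    Integrable (fun v => f v * log (maxwellian κ ρ u v)) := by
  simp_rw [mul_log_maxwellian hκ hρ]
  exact (hf.const_mul _).sub ((integrable_mul_norm_sub_sq_s11 hf hmom u).const_mul _)

lemma integral_mul_log_maxwellian (hκ : 0 < κ) (hf : Integrable f) (hρ : 0 < ∫ v, f v)
    (hmom : Integrable (fun v => ‖v‖ ^ 2 * f v)) {u : V}
    (hmean : ∫ v, f v • v = (∫ v, f v) • u) :
    ∫ v, f v * log (maxwellian κ (∫ v, f v) u v) =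
      (log (∫ v, f v) - Module.finrank ℝ V / 2 * log (2 * π * κ)) * (∫ v, f v)
        - (2 * κ)⁻¹ * ((∫ v, ‖v‖ ^ 2 * f v) - (∫ v, f v) * ‖u‖ ^ 2) := by
  simp_rw [mul_log_maxwellian hκ hρ]
  rw [integral_sub (hf.const_mul _) ((integrable_mul_norm_sub_sq_s11 hf hmom u).const_mul _),
    integral_const_mul, integral_const_mul, integral_mul_norm_sub_sq hf hmom hmean]

lemma integral_mul_log_maxwellian_le (hκ : 0 < κ) (hf_nonneg : 0 ≤ᵐ[volume] f)
    (hf : Integrable f) (hρ : 0 < ∫ v, f v) (hmom : Integrable (fun v => ‖v‖ ^ 2 * f v))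
    (hent : Integrable (fun v => f v * log (f v))) (u : V) :
    ∫ v, f v * log (maxwellian κ (∫ v, f v) u v) ≤ ∫ v, f v * log (f v) := by
  have := integral_mul_log_add_sub_le hf_nonneg (ae_of_all _ (maxwellian_pos hκ hρ u)) hf
    (integrable_maxwellian hκ hρ u) (integrable_mul_log_maxwellian hκ hρ hf hmom u) hent
  rwa [integral_maxwellian hκ, add_sub_cancel_right] at this

end Maxwellian

theorem free_energy_minimization_general (d : ℕ) (κ : ℝ) (hκ : 0 < κ)
    (f : EuclideanSpace ℝ (Fin d) → ℝ) (hf_nonneg : ∀ v, 0 ≤ f v)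
    (hf_int : Integrable f) (hρ : 0 < ∫ v, f v)
    (hmom : Integrable (fun v => ‖v‖^2 * f v))
    (hent : Integrable (fun v => f v * Real.log (f v))) :
    (1/2) * (∫ v, f v) * ‖(∫ v, f v)⁻¹ • (∫ v, f v • v)‖^2
        + κ * (∫ v, f v) * Real.log (∫ v, f v) ≤
      ∫ v, ((1/2) * ‖v‖^2 * f v + κ * (f v * Real.log (f v))
        + κ * ((d:ℝ)/2) * Real.log (2 * Real.pi * κ) * f v) := by
  set u := (∫ v, f v)⁻¹ • ∫ v, f v • v
  have hmean : ∫ v, f v • v = (∫ v, f v) • u := (smul_inv_smul₀ hρ.ne' _).symm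
  have hgibbs := integral_mul_log_maxwellian_le hκ (ae_of_all _ hf_nonneg) hf_int hρ hmom hent u
  rw [integral_mul_log_maxwellian hκ hf_int hρ hmom hmean, finrank_euclideanSpace_fin] at hgibbs
  have hkin : Integrable (fun v => (1/2) * (‖v‖^2 * f v) + κ * (f v * Real.log (f v))) :=
    (hmom.const_mul _).add (hent.const_mul _)
  have hsplit : ∫ v, ((1/2) * ‖v‖^2 * f v + κ * (f v * Real.log (f v))
        + κ * ((d:ℝ)/2) * Real.log (2 * Real.pi * κ) * f v) =
      (1/2) * (∫ v, ‖v‖^2 * f v) + κ * (∫ v, f v * Real.log (f v))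
        + κ * ((d:ℝ)/2) * Real.log (2 * Real.pi * κ) * ∫ v, f v := by
    simp_rw [mul_assoc (1/2 : ℝ)]
    rw [integral_add hkin (hf_int.const_mul _), integral_add (hmom.const_mul _) (hent.const_mul _),
      integral_const_mul, integral_const_mul, integral_const_mul]
  rw [hsplit]
  have hκ2 : κ * (2 * κ)⁻¹ = 1 / 2 := by field_simp
  linear_combination κ * hgibbs + ((∫ v, ‖v‖ ^ 2 * f v) - (∫ v, f v) * ‖u‖ ^ 2) * hκ2

/-- The minimization principle (1.12): the macroscopic free energy
`(1/2)ρ_f|u_f|² + κρ_f log ρ_f` is bounded by the kinetic free energy `∫ H_κ[f] dv`. -/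
theorem free_energy_minimization (d : ℕ) (hd : 1 ≤ d) (κ : ℝ) (hκ : 0 < κ)
    (f : EuclideanSpace ℝ (Fin d) → ℝ) (hf_nonneg : ∀ v, 0 ≤ f v)
    (hf_int : Integrable f) (hρ : 0 < ∫ v, f v)
    (hmom : Integrable (fun v => ‖v‖^2 * f v))
    (hent : Integrable (fun v => f v * Real.log (f v))) :
    (1/2) * (∫ v, f v) * ‖(∫ v, f v)⁻¹ • (∫ v, f v • v)‖^2
        + κ * (∫ v, f v) * Real.log (∫ v, f v) ≤
      ∫ v, ((1/2) * ‖v‖^2 * f v + κ * (f v * Real.log (f v))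
        + κ * ((d:ℝ)/2) * Real.log (2 * Real.pi * κ) * f v) :=
  free_energy_minimization_general d κ hκ f hf_nonneg hf_int hρ hmom hent
end
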